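/- arXiv:2109.09200 — 2 statements merged into one kernel-verified Lean document; each statement's English description precedes it below -/
import Mathlib

section
/- Let B be an interval building set on [n] (each block is an interval of integers) and let [i,j] ∈ B be a block with at least three distinct inclusion-maximal strict subblocks. Then [i,j] is elementary. Consequently, every block of an interval building set with at least three maximal strict subblocks is elementary. -/
/-- A building set on the ground set `Vs ⊆ ℕ`. -/
def IsBuildingSetOn (Vs : Finset ℕ) (B : Finset (Finset ℕ)) : Prop :=
  (∀ b ∈ B, b.Nonempty ∧ b ⊆ Vs) ∧
  (∀ b₁ ∈ B, ∀ b₂ ∈ B, (b₁ ∩ b₂).Nonempty → b₁ ∪ b₂ ∈ B) ∧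
  (∀ v ∈ Vs, {v} ∈ B)

/-- An interval building set on `[n] = {1, …, n}`: every block is an interval. -/
def IsIntervalBuildingSet (n : ℕ) (B : Finset (Finset ℕ)) : Prop :=
  IsBuildingSetOn (Finset.Icc 1 n) B ∧ ∀ b ∈ B, ∃ a c, b = Finset.Icc a c

/-- `M` is an inclusion-maximal block of `B` strictly contained in `P`. -/
def MaxIn (B : Finset (Finset ℕ)) (P M : Finset ℕ) : Prop :=
  M ∈ B ∧ M ⊂ P ∧ ∀ C ∈ B, M ⊂ C → ¬ C ⊂ P

/-- The block `P` is elementary. -/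
def Elementary (B : Finset (Finset ℕ)) (P : Finset ℕ) : Prop :=
  ∀ B' ∈ B, ∀ B'' ∈ B, B' ≠ P → B'' ≠ P → P = B' ∪ B'' → B' ∩ B'' = ∅

theorem stmt17 (n : ℕ) (B : Finset (Finset ℕ)) (hB : IsIntervalBuildingSet n B)
    (P : Finset ℕ) (hP : P ∈ B)
    (M₁ M₂ M₃ : Finset ℕ)
    (h1 : MaxIn B P M₁) (h2 : MaxIn B P M₂) (h3 : MaxIn B P M₃)
    (h12 : M₁ ≠ M₂) (h13 : M₁ ≠ M₃) (h23 : M₂ ≠ M₃) :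
    Elementary B P := by
  obtain ⟨⟨hbs1, hbs2, _⟩, hint⟩ := hB
  intro B' hB' B'' hB'' hne' hne'' hPeq
  by_contra hcap
  have hcapne : (B' ∩ B'').Nonempty := Finset.nonempty_iff_ne_empty.mpr hcap
  have hPne : P.Nonempty := (hbs1 P hP).1
  set i := P.min' hPne with hidef
  set j := P.max' hPne with hjdef
  have hiP : i ∈ P := P.min'_mem hPne
  have hjP : j ∈ P := P.max'_mem hPne
  have hPIcc : P = Finset.Icc i j := by
    obtain ⟨a, c, hac⟩ := hint P hP
    apply Finset.Subset.antisymm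
    · intro x hx
      exact Finset.mem_Icc.mpr ⟨P.min'_le x hx, P.le_max' x hx⟩
    · intro x hx
      rw [hac] at hiP hjP ⊢
      rw [Finset.mem_Icc] at hiP hjP hx ⊢
      omega
  -- A block inside P containing both endpoints is P itself.
  have hfull : ∀ X ∈ B, X ⊆ P → i ∈ X → j ∈ X → X = P := by
    intro X hX hXP hiX hjX
    obtain ⟨p, q, hpq⟩ := hint X hX
    apply Finset.Subset.antisymm hXP
    intro x hx
    rw [hPIcc, Finset.mem_Icc] at hx
    rw [hpq, Finset.mem_Icc] at hiX hjX ⊢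
    omega
  -- If a maximal strict subblock meets a block X ⊆ P, then X ⊆ M or M ∪ X = P.
  have hmeet : ∀ M, MaxIn B P M → ∀ X ∈ B, X ⊆ P → (M ∩ X).Nonempty →
      X ⊆ M ∨ M ∪ X = P := by
    intro M hM X hX hXP hMX
    have hU : M ∪ X ∈ B := hbs2 M hM.1 X hX hMX
    have hUP : M ∪ X ⊆ P := Finset.union_subset hM.2.1.subset hXP
    by_cases hc : M ⊂ M ∪ X
    · right
      have hn := hM.2.2 (M ∪ X) hU hc
      refine Finset.Subset.antisymm hUP ?_
      by_contra h
      exact hn ((Finset.ssubset_def).mpr ⟨hUP, h⟩)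
    · left
      have hMeq : M ∪ X = M := by
        rw [Finset.ssubset_def] at hc
        push_neg at hc
        exact Finset.Subset.antisymm (hc Finset.subset_union_left) Finset.subset_union_left
      exact hMeq ▸ Finset.subset_union_right
  -- Each maximal strict subblock contains an endpoint of P.
  have hend : ∀ M, MaxIn B P M → i ∈ M ∨ j ∈ M := by
    intro M hM
    by_contra h
    push_neg at h
    obtain ⟨hiM, hjM⟩ := h
    obtain ⟨x, hx⟩ := (hbs1 M hM.1).1
    have hxP : x ∈ P := hM.2.1.subset hx
    have hB'P : B' ⊆ P := hPeq ▸ Finset.subset_union_left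
    have hB''P : B'' ⊆ P := hPeq ▸ Finset.subset_union_right
    have key : ∀ X ∈ B, X ≠ P → X ⊆ P → (M ∩ X).Nonempty → X ⊆ M := by
      intro X hX hXne hXP hMX
      rcases hmeet M hM X hX hXP hMX with h1' | h1'
      · exact h1'
      · exfalso
        have hiX : i ∈ X := by
          have : i ∈ M ∪ X := h1' ▸ hiP
          rcases Finset.mem_union.mp this with hh | hh
          · exact absurd hh hiM
          · exact hh
        have hjX : j ∈ X := by
          have : j ∈ M ∪ X := h1' ▸ hjP
          rcases Finset.mem_union.mp this with hh | hh
          · exact absurd hh hjM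
          · exact hh
        exact hXne (hfull X hX hXP hiX hjX)
    obtain ⟨y, hy⟩ := hcapne
    have hyB' : y ∈ B' := (Finset.mem_inter.mp hy).1
    have hyB'' : y ∈ B'' := (Finset.mem_inter.mp hy).2
    have hboth : B' ⊆ M ∧ B'' ⊆ M := by
      have hx2 : x ∈ B' ∪ B'' := hPeq ▸ hxP
      rcases Finset.mem_union.mp hx2 with hxB | hxB
      · have hsub' : B' ⊆ M := key B' hB' hne' hB'P ⟨x, Finset.mem_inter.mpr ⟨hx, hxB⟩⟩
        have hyM : y ∈ M := hsub' hyB'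
        exact ⟨hsub', key B'' hB'' hne'' hB''P ⟨y, Finset.mem_inter.mpr ⟨hyM, hyB''⟩⟩⟩
      · have hsub'' : B'' ⊆ M := key B'' hB'' hne'' hB''P ⟨x, Finset.mem_inter.mpr ⟨hx, hxB⟩⟩
        have hyM : y ∈ M := hsub'' hyB''
        exact ⟨key B' hB' hne' hB'P ⟨y, Finset.mem_inter.mpr ⟨hyM, hyB'⟩⟩, hsub''⟩
    have hPM : P ⊆ M := hPeq ▸ Finset.union_subset hboth.1 hboth.2
    have := hM.2.1
    rw [Finset.ssubset_def] at this
    exact this.2 hPM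
  -- Two distinct maximal strict subblocks sharing a point union to P.
  have hshare : ∀ M M', MaxIn B P M → MaxIn B P M' → M ≠ M' →
      ∀ v, v ∈ M → v ∈ M' → M ∪ M' = P := by
    intro M M' hM hM' hne v hvM hvM'
    have hU : M ∪ M' ∈ B := hbs2 M hM.1 M' hM'.1 ⟨v, Finset.mem_inter.mpr ⟨hvM, hvM'⟩⟩
    have hUP : M ∪ M' ⊆ P := Finset.union_subset hM.2.1.subset hM'.2.1.subset
    by_cases hc : M ⊂ M ∪ M'
    · have hn := hM.2.2 (M ∪ M') hU hc
      refine Finset.Subset.antisymm hUP ?_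
      by_contra h
      exact hn ((Finset.ssubset_def).mpr ⟨hUP, h⟩)
    · exfalso
      have hMeq : M ∪ M' = M := by
        rw [Finset.ssubset_def] at hc
        push_neg at hc
        exact Finset.Subset.antisymm (hc Finset.subset_union_left) Finset.subset_union_left
      have hM'M : M' ⊆ M := hMeq ▸ Finset.subset_union_right
      have hM'ssM : M' ⊂ M := (Finset.ssubset_iff_subset_ne).mpr ⟨hM'M, fun h => hne h.symm⟩
      exact hM'.2.2 M hM.1 hM'ssM hM.2.1
  -- Two distinct maximal strict subblocks cannot share an endpoint of P.
  have hno : ∀ v w : ℕ, w ∈ P → (∀ X ∈ B, X ⊆ P → v ∈ X → w ∈ X → X = P) →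
      ∀ M M', MaxIn B P M → MaxIn B P M' → M ≠ M' → v ∈ M → v ∈ M' → False := by
    intro v w hw hfull' M M' hM hM' hne hvM hvM'
    have hU := hshare M M' hM hM' hne v hvM hvM'
    have hwU : w ∈ M ∪ M' := hU ▸ hw
    rcases Finset.mem_union.mp hwU with hh | hh
    · have hEq := hfull' M hM.1 hM.2.1.subset hvM hh
      have := hM.2.1
      rw [Finset.ssubset_iff_subset_ne] at this
      exact this.2 hEq
    · have hEq := hfull' M' hM'.1 hM'.2.1.subset hvM' hh
      have := hM'.2.1
      rw [Finset.ssubset_iff_subset_ne] at this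
      exact this.2 hEq
  have hfullj : ∀ X ∈ B, X ⊆ P → j ∈ X → i ∈ X → X = P :=
    fun X hX hXP hj hi => hfull X hX hXP hi hj
  rcases hend M₁ h1 with e1 | e1 <;> rcases hend M₂ h2 with e2 | e2 <;>
    rcases hend M₃ h3 with e3 | e3
  · exact hno i j hjP hfull M₁ M₂ h1 h2 h12 e1 e2
  · exact hno i j hjP hfull M₁ M₂ h1 h2 h12 e1 e2
  · exact hno i j hjP hfull M₁ M₃ h1 h3 h13 e1 e3
  · exact hno j i hiP hfullj M₂ M₃ h2 h3 h23 e2 e3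
  · exact hno i j hjP hfull M₂ M₃ h2 h3 h23 e2 e3
  · exact hno j i hiP hfullj M₁ M₃ h1 h3 h13 e1 e3
  · exact hno j i hiP hfullj M₁ M₂ h1 h2 h12 e1 e2
  · exact hno j i hiP hfullj M₁ M₂ h1 h2 h12 e1 e2
end

section
/- Let B be an interval building set on [n] and let [i,j] ∈ B with i < j be non-elementary. Define ℓ = min{k ∈ [i+1,j] : [k,j] ∈ B} and r = max{k ∈ [i,j−1] : [i,k] ∈ B}. Then ℓ ≤ r, the intervals [i,r] and [ℓ,j] are the only two inclusion-maximal strict subblocks of [i,j], their union is [i,j], and their intersection is [ℓ,r]. -/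
/-!
Every block strictly inside `[i, j]` that contains `i` is an interval `[i, b]` with `b < j`, hence
lies in `[i, r]` by the choice of `r`; symmetrically a block containing `j` lies in `[ℓ, j]`.
A witness `[i, j] = X ∪ Y` of non-elementarity has one part through `i` and the other through `j`,
and a common point of them sits in `[ℓ, r]`, so `ℓ ≤ r`. A block avoiding both endpoints either
lies to the right of `r`, hence in `[ℓ, j]`, or meets `[i, r]`, and then its union with `[i, r]`
is again a block through `i`. So every strict subblock lies in `[i, r]` or `[ℓ, j]`, which gives
both maximality and uniqueness.
-/

open Finset

theorem MaxIn.eq_of_subset {B : Finset (Finset ℕ)} {P M C : Finset ℕ} (hM : MaxIn B P M)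
    (hC : C ∈ B) (hCP : C ⊂ P) (hMC : M ⊆ C) : M = C :=
  by_contra fun hne => hM.2.2 C hC (Finset.ssubset_iff_subset_ne.2 ⟨hMC, hne⟩) hCP

section IntervalBlocks

variable {B : Finset (Finset ℕ)} {i j l r : ℕ}

theorem subset_Icc_of_left_mem (hint : ∀ b ∈ B, ∃ a c, b = Icc a c)
    (hrmax : ∀ k, i ≤ k → k < j → Icc i k ∈ B → k ≤ r)
    {X : Finset ℕ} (hX : X ∈ B) (hXP : X ⊆ Icc i j) (hne : X ≠ Icc i j) (hi : i ∈ X) :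
    X ⊆ Icc i r := by
  obtain ⟨a, b, rfl⟩ := hint X hX
  obtain ⟨hai, hib⟩ := mem_Icc.1 hi
  obtain ⟨hia, hbj⟩ := (Icc_subset_Icc_iff (hai.trans hib)).1 hXP
  obtain rfl : a = i := le_antisymm hai hia
  have hbj : b < j := hbj.lt_of_ne fun h => hne (h ▸ rfl)
  exact Icc_subset_Icc le_rfl (hrmax b hib hbj hX)

theorem subset_Icc_of_right_mem (hint : ∀ b ∈ B, ∃ a c, b = Icc a c)
    (hlmin : ∀ k, i < k → k ≤ j → Icc k j ∈ B → l ≤ k)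
    {X : Finset ℕ} (hX : X ∈ B) (hXP : X ⊆ Icc i j) (hne : X ≠ Icc i j) (hj : j ∈ X) :
    X ⊆ Icc l j := by
  obtain ⟨a, b, rfl⟩ := hint X hX
  obtain ⟨haj, hjb⟩ := mem_Icc.1 hj
  obtain ⟨hia, hbj⟩ := (Icc_subset_Icc_iff (haj.trans hjb)).1 hXP
  obtain rfl : b = j := le_antisymm hbj hjb
  have hia : i < a := hia.lt_of_ne fun h => hne (h ▸ rfl)
  exact Icc_subset_Icc (hlmin a hia haj hX) le_rfl

theorem le_of_union_eq_of_left_mem (hint : ∀ b ∈ B, ∃ a c, b = Icc a c)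
    (hlmin : ∀ k, i < k → k ≤ j → Icc k j ∈ B → l ≤ k)
    (hrmax : ∀ k, i ≤ k → k < j → Icc i k ∈ B → k ≤ r) (hrj : r < j)
    {X Y : Finset ℕ} (hX : X ∈ B) (hY : Y ∈ B) (hXP : X ≠ Icc i j) (hYP : Y ≠ Icc i j)
    (hun : Icc i j = X ∪ Y) (hXY : (X ∩ Y).Nonempty) (hi : i ∈ X) : l ≤ r := by
  have hXr : X ⊆ Icc i r :=
    subset_Icc_of_left_mem hint hrmax hX (hun ▸ subset_union_left) hXP hi
  have hjY : j ∈ Y := by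
    have hj : j ∈ X ∪ Y := hun ▸ right_mem_Icc.2 ((mem_Icc.1 (hXr hi)).2.trans hrj.le)
    refine (mem_union.1 hj).resolve_left fun hjX => ?_
    exact absurd (mem_Icc.1 (hXr hjX)).2 hrj.not_ge
  have hYl : Y ⊆ Icc l j :=
    subset_Icc_of_right_mem hint hlmin hY (hun ▸ subset_union_right) hYP hjY
  obtain ⟨x, hx⟩ := hXY
  exact (mem_Icc.1 (hYl (mem_inter.1 hx).2)).1.trans (mem_Icc.1 (hXr (mem_inter.1 hx).1)).2

theorem le_of_not_elementary (hint : ∀ b ∈ B, ∃ a c, b = Icc a c)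
    (hlmin : ∀ k, i < k → k ≤ j → Icc k j ∈ B → l ≤ k)
    (hrmax : ∀ k, i ≤ k → k < j → Icc i k ∈ B → k ≤ r) (hrj : r < j)
    (h : ¬ Elementary B (Icc i j)) : l ≤ r := by
  simp only [Elementary, not_forall, ← nonempty_iff_ne_empty] at h
  obtain ⟨X, hX, Y, hY, hXP, hYP, hun, hXY⟩ := h
  obtain ⟨x, hx⟩ := hXY
  have hxP : x ∈ Icc i j := hun ▸ mem_union_left Y (mem_inter.1 hx).1
  have hi : i ∈ X ∪ Y := hun ▸ left_mem_Icc.2 ((mem_Icc.1 hxP).1.trans (mem_Icc.1 hxP).2)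
  rcases mem_union.1 hi with hiX | hiY
  · exact le_of_union_eq_of_left_mem hint hlmin hrmax hrj hX hY hXP hYP hun ⟨x, hx⟩ hiX
  · exact le_of_union_eq_of_left_mem hint hlmin hrmax hrj hY hX hYP hXP
      (hun.trans (union_comm X Y)) ⟨x, inter_comm X Y ▸ hx⟩ hiY

theorem subset_Icc_or_subset_Icc
    (hunion : ∀ b₁ ∈ B, ∀ b₂ ∈ B, (b₁ ∩ b₂).Nonempty → b₁ ∪ b₂ ∈ B)
    (hint : ∀ b ∈ B, ∃ a c, b = Icc a c)
    (hlmin : ∀ k, i < k → k ≤ j → Icc k j ∈ B → l ≤ k)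
    (hrmax : ∀ k, i ≤ k → k < j → Icc i k ∈ B → k ≤ r)
    (hlr : l ≤ r) (hrj : r < j) (hr : Icc i r ∈ B)
    {C : Finset ℕ} (hC : C ∈ B) (hCP : C ⊆ Icc i j) (hne : C ≠ Icc i j) :
    C ⊆ Icc i r ∨ C ⊆ Icc l j := by
  obtain ⟨a, b, rfl⟩ := hint C hC
  rcases lt_or_ge b a with hba | hab
  · exact Or.inl (by simp [Icc_eq_empty_of_lt hba])
  obtain ⟨hia, hbj⟩ := (Icc_subset_Icc_iff hab).1 hCP
  rcases hia.eq_or_lt with rfl | hia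
  · exact Or.inl (subset_Icc_of_left_mem hint hrmax hC hCP hne (left_mem_Icc.2 hab))
  rcases hbj.eq_or_lt with rfl | hbj
  · exact Or.inr (subset_Icc_of_right_mem hint hlmin hC hCP hne (right_mem_Icc.2 hab))
  rcases lt_or_ge r a with hra | har
  · exact Or.inr (Icc_subset_Icc (hlr.trans hra.le) hbj.le)
  have hU : Icc a b ∪ Icc i r ∈ B :=
    hunion _ hC _ hr ⟨a, mem_inter.2 ⟨left_mem_Icc.2 hab, mem_Icc.2 ⟨hia.le, har⟩⟩⟩
  have hjU : j ∉ Icc a b ∪ Icc i r := by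
    simp only [mem_union, mem_Icc]
    omega
  have hUP : Icc a b ∪ Icc i r ⊆ Icc i j := union_subset hCP (Icc_subset_Icc le_rfl hrj.le)
  have hiU : i ∈ Icc a b ∪ Icc i r := mem_union_right _ (left_mem_Icc.2 (hia.le.trans har))
  have hUne : Icc a b ∪ Icc i r ≠ Icc i j :=
    fun h => hjU (h ▸ right_mem_Icc.2 (hia.le.trans (hab.trans hbj.le)))
  exact Or.inl (subset_union_left.trans (subset_Icc_of_left_mem hint hrmax hU hUP hUne hiU))

theorem maxIn_Icc_left (hint : ∀ b ∈ B, ∃ a c, b = Icc a c)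
    (hrmax : ∀ k, i ≤ k → k < j → Icc i k ∈ B → k ≤ r)
    (hir : i ≤ r) (hrj : r < j) (hr : Icc i r ∈ B) :
    MaxIn B (Icc i j) (Icc i r) := by
  refine ⟨hr, Icc_ssubset_Icc_right (hir.trans hrj.le) le_rfl hrj, fun C hC hlt hCP => ?_⟩
  have hiC : i ∈ C := hlt.subset (left_mem_Icc.2 hir)
  exact hlt.not_subset (subset_Icc_of_left_mem hint hrmax hC hCP.subset hCP.ne hiC)

theorem maxIn_Icc_right (hint : ∀ b ∈ B, ∃ a c, b = Icc a c)
    (hlmin : ∀ k, i < k → k ≤ j → Icc k j ∈ B → l ≤ k)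
    (hil : i < l) (hlj : l ≤ j) (hl : Icc l j ∈ B) :
    MaxIn B (Icc i j) (Icc l j) := by
  refine ⟨hl, Icc_ssubset_Icc_left (hil.le.trans hlj) hil le_rfl, fun C hC hlt hCP => ?_⟩
  have hjC : j ∈ C := hlt.subset (right_mem_Icc.2 hlj)
  exact hlt.not_subset (subset_Icc_of_right_mem hint hlmin hC hCP.subset hCP.ne hjC)

end IntervalBlocks

theorem stmt18_general (n : ℕ) (B : Finset (Finset ℕ)) (hB : IsIntervalBuildingSet n B)
    (i j : ℕ)
    (hnotel : ¬ Elementary B (Finset.Icc i j))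
    (l r : ℕ)
    (hl1 : i < l) (hl2 : l ≤ j) (hl3 : Finset.Icc l j ∈ B)
    (hlmin : ∀ k, i < k → k ≤ j → Finset.Icc k j ∈ B → l ≤ k)
    (hr1 : i ≤ r) (hr2 : r < j) (hr3 : Finset.Icc i r ∈ B)
    (hrmax : ∀ k, i ≤ k → k < j → Finset.Icc i k ∈ B → k ≤ r) :
    l ≤ r ∧
    MaxIn B (Finset.Icc i j) (Finset.Icc i r) ∧
    MaxIn B (Finset.Icc i j) (Finset.Icc l j) ∧
    (∀ M, MaxIn B (Finset.Icc i j) M → M = Finset.Icc i r ∨ M = Finset.Icc l j) ∧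
    Finset.Icc i r ∪ Finset.Icc l j = Finset.Icc i j ∧
    Finset.Icc i r ∩ Finset.Icc l j = Finset.Icc l r := by
  obtain ⟨⟨-, hunion, -⟩, hint⟩ := hB
  have hlr : l ≤ r := le_of_not_elementary hint hlmin hrmax hr2 hnotel
  have hleft := maxIn_Icc_left hint hrmax hr1 hr2 hr3
  have hright := maxIn_Icc_right hint hlmin hl1 hl2 hl3
  refine ⟨hlr, hleft, hright, fun M hM => ?_, ?_, ?_⟩
  · rcases subset_Icc_or_subset_Icc hunion hint hlmin hrmax hlr hr2 hr3 hM.1 hM.2.1.subset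
      hM.2.1.ne with h | h
    · exact Or.inl (hM.eq_of_subset hr3 hleft.2.1 h)
    · exact Or.inr (hM.eq_of_subset hl3 hright.2.1 h)
  all_goals
    ext x
    simp only [mem_union, mem_inter, mem_Icc]
    omega

theorem stmt18 (n : ℕ) (B : Finset (Finset ℕ)) (hB : IsIntervalBuildingSet n B)
    (i j : ℕ) (hij : i < j) (hP : Finset.Icc i j ∈ B)
    (hnotel : ¬ Elementary B (Finset.Icc i j))
    (l r : ℕ)
    (hl1 : i < l) (hl2 : l ≤ j) (hl3 : Finset.Icc l j ∈ B)
    (hlmin : ∀ k, i < k → k ≤ j → Finset.Icc k j ∈ B → l ≤ k)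
    (hr1 : i ≤ r) (hr2 : r < j) (hr3 : Finset.Icc i r ∈ B)
    (hrmax : ∀ k, i ≤ k → k < j → Finset.Icc i k ∈ B → k ≤ r) :
    l ≤ r ∧
    MaxIn B (Finset.Icc i j) (Finset.Icc i r) ∧
    MaxIn B (Finset.Icc i j) (Finset.Icc l j) ∧
    (∀ M, MaxIn B (Finset.Icc i j) M → M = Finset.Icc i r ∨ M = Finset.Icc l j) ∧
    Finset.Icc i r ∪ Finset.Icc l j = Finset.Icc i j ∧
    Finset.Icc i r ∩ Finset.Icc l j = Finset.Icc l r :=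
  stmt18_general n B hB i j hnotel l r hl1 hl2 hl3 hlmin hr1 hr2 hr3 hrmax
end
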